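/- Let (X,d) be a finite metric space and h a chaining functional of log-concave type. Then strong duality holds: γ_h(X) = γ*_h(X), i.e., inf_μ sup_ν Σ_{x∈X} ν(x)·∫₀^∞ h(μ(B(x,r))) dr = sup_ν inf_μ Σ_{x∈X} ν(x)·∫₀^∞ h(μ(B(x,r))) dr, where μ and ν range over all probability measures on X; equivalently, inf_μ max_{x∈X} ∫₀^∞ h(μ(B(x,r))) dr = γ*_h(X). -/

import Mathlib

open MeasureTheory

noncomputable section

/-- `f` is log-concave on `[0,∞)`. -/
def IsLogConcaveOn (f : ℝ → ℝ) : Prop :=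
  ∀ x ∈ Set.Ici (0:ℝ), ∀ y ∈ Set.Ici (0:ℝ), ∀ t ∈ Set.Icc (0:ℝ) 1,
    f x ^ t * f y ^ (1 - t) ≤ f (t * x + (1 - t) * y)

/-- `f` is a continuous, non-increasing, log-concave probability density on `[0,∞)`
normalized so that `f 0 = 1`. -/
structure IsChainingDensity (f : ℝ → ℝ) : Prop where
  nonneg : ∀ t : ℝ, 0 ≤ t → 0 ≤ f t
  continuousOn : ContinuousOn f (Set.Ici 0)
  antitoneOn : AntitoneOn f (Set.Ici 0)
  logConcave : IsLogConcaveOn f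
  total : (∫ t in Set.Ioi (0:ℝ), f t) = 1
  normalized : f 0 = 1

/-- The complementary cumulative distribution function `F(s) = ∫_s^∞ f(t) dt`. -/
def ccdf (f : ℝ → ℝ) (s : ℝ) : ℝ := ∫ t in Set.Ioi s, f t

/-- The chaining functional `h(p) = F⁻¹(p)`, defined on `(0,1]` as the least
`s ≥ 0` with `F(s) ≤ p`. -/
def chainFn (f : ℝ → ℝ) (p : ℝ) : ℝ := sInf {s : ℝ | 0 ≤ s ∧ ccdf f s ≤ p}

open scoped ENNReal

/-- The extended (`[0,∞]`-valued) chaining functional: `h(p)` is the least `s ≥ 0`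
with `F(s) ≤ p`, and `+∞` when no such `s` exists (in particular
`h(0) = lim_{p→0⁺} h(p) ∈ (0,∞]`). -/
def chainFnE (f : ℝ → ℝ) (p : ℝ) : ℝ≥0∞ :=
  sInf {t : ℝ≥0∞ | ∃ s : ℝ, 0 ≤ s ∧ ccdf f s ≤ p ∧ t = ENNReal.ofReal s}

/-- A probability measure on a finite set, given by its point masses. -/
def IsProbOn {X : Type*} [Fintype X] (μ : X → ℝ) : Prop :=
  (∀ x, 0 ≤ μ x) ∧ (∑ x, μ x) = 1

/-- The mass `μ(B(x,r))` of the closed ball of radius `r` around `x`. -/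
def ballMass {X : Type*} [MetricSpace X] [Fintype X] (μ : X → ℝ) (x : X) (r : ℝ) : ℝ :=
  ∑ y ∈ Finset.univ.filter (fun y => dist x y ≤ r), μ y

/-- `∫₀^∞ h(μ(B(x,r))) dr`, valued in `[0,∞]`. -/
def Hint {X : Type*} [MetricSpace X] [Fintype X] (f : ℝ → ℝ) (μ : X → ℝ) (x : X) : ℝ≥0∞ :=
  ∫⁻ r in Set.Ioi (0:ℝ), chainFnE f (ballMass μ x r)

/-- The diameter of the finite metric space `X`. -/
def fdiam (X : Type*) [MetricSpace X] : ℝ := Metric.diam (Set.univ : Set X)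

/-- The dual functional `γ*_h(X) = sup_ν inf_μ Σ_x ν(x)·∫₀^∞ h(μ(B(x,r))) dr`. -/
def gammaStar (X : Type*) [MetricSpace X] [Fintype X] (f : ℝ → ℝ) : ℝ≥0∞ :=
  ⨆ ν : {m : X → ℝ // IsProbOn m}, ⨅ μ : {m : X → ℝ // IsProbOn m},
    ∑ x, ENNReal.ofReal (ν.1 x) * Hint f μ.1 x

/-- The majorizing measure functional
`γ_h(X) = inf_μ max_{x∈X} ∫₀^∞ h(μ(B(x,r))) dr`. -/
def gammaPrimal (X : Type*) [MetricSpace X] [Fintype X] (f : ℝ → ℝ) : ℝ≥0∞ :=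
  ⨅ μ : {m : X → ℝ // IsProbOn m}, ⨆ x : X, Hint f μ.1 x

/-!
Since `F' = -f` is nondecreasing, `F` is convex on `[0, ∞)`, hence so is its generalized inverse
`h`, and `μ ↦ ∫₀^∞ h(μ(B(x,r))) dr` is convex. The vectors `a ∈ ℝ^X` with
`∫₀^∞ h(μ(B(x,r))) dr ≤ a x` for all `x` and some `μ` then form a convex upward closed set. If it
stayed away from the constant vector `γ*_h(X) + ε`, a separating hyperplane would have a
nonnegative normal, i.e. a probability `ν` against which every `μ` pays more than `γ*_h(X)`.
Infinite integrals are avoided by mixing `ν` with the uniform measure.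
-/

open Set

section Ccdf

variable {f : ℝ → ℝ}

lemma ccdf_eq_integral_Ioc_add (hint : IntegrableOn f (Ioi 0)) {a b : ℝ} (ha : 0 ≤ a)
    (hab : a ≤ b) : ccdf f a = (∫ t in Ioc a b, f t) + ccdf f b := by
  rw [ccdf, ← Ioc_union_Ioi_eq_Ioi hab,
    setIntegral_union (Ioc_disjoint_Ioi le_rfl) measurableSet_Ioi
      (hint.mono_set (Ioc_subset_Ioi_self.trans (Ioi_subset_Ioi ha)))
      (hint.mono_set (Ioi_subset_Ioi (ha.trans hab))), ccdf]

lemma mul_le_integral_Ioc (hanti : AntitoneOn f (Ici 0)) (hint : IntegrableOn f (Ioi 0))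
    {a b : ℝ} (ha : 0 ≤ a) (hab : a ≤ b) : (b - a) * f b ≤ ∫ t in Ioc a b, f t := by
  have := setIntegral_ge_of_const_le_real (c := f b) measurableSet_Ioc measure_Ioc_lt_top.ne
    (fun t ht => hanti (ha.trans ht.1.le) (ha.trans hab) ht.2)
    (hint.mono_set (Ioc_subset_Ioi_self.trans (Ioi_subset_Ioi ha)))
  rwa [Real.volume_real_Ioc_of_le hab, mul_comm] at this

lemma integral_Ioc_le_mul (hanti : AntitoneOn f (Ici 0)) (hint : IntegrableOn f (Ioi 0))
    {a b : ℝ} (ha : 0 ≤ a) (hab : a ≤ b) : (∫ t in Ioc a b, f t) ≤ (b - a) * f a := by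
  have := setIntegral_mono_on (s := Ioc a b)
    (hint.mono_set (Ioc_subset_Ioi_self.trans (Ioi_subset_Ioi ha)))
    (integrableOn_const measure_Ioc_lt_top.ne) measurableSet_Ioc
    (fun t ht => hanti ha (ha.trans ht.1.le) ht.1.le)
  rwa [setIntegral_const, Real.volume_real_Ioc_of_le hab, smul_eq_mul] at this

theorem convexOn_ccdf (hanti : AntitoneOn f (Ici 0)) (hint : IntegrableOn f (Ioi 0)) :
    ConvexOn ℝ (Ici 0) (ccdf f) := by
  -- the slope on `[x, y]` is at most `-f y`, the slope on `[y, z]` at least `-f y`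
  refine convexOn_of_slope_mono_adjacent (convex_Ici 0) fun {x y z} hx _ hxy hyz => ?_
  have hy : 0 ≤ y := le_trans hx hxy.le
  have hxy' := ccdf_eq_integral_Ioc_add hint hx hxy.le
  have hyz' := ccdf_eq_integral_Ioc_add hint hy hyz.le
  calc (ccdf f y - ccdf f x) / (y - x) ≤ -f y := by
        rw [div_le_iff₀ (sub_pos.2 hxy)]
        linarith [mul_le_integral_Ioc hanti hint hx hxy.le]
    _ ≤ (ccdf f z - ccdf f y) / (z - y) := by
        rw [le_div_iff₀ (sub_pos.2 hyz)]
        linarith [integral_Ioc_le_mul hanti hint hy hyz.le]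

end Ccdf

lemma chainFnE_eq_iInf (f : ℝ → ℝ) (p : ℝ) :
    chainFnE f p = ⨅ s : {s : ℝ // 0 ≤ s ∧ ccdf f s ≤ p}, ENNReal.ofReal s := by
  rw [chainFnE, ← sInf_range]
  congr
  ext t
  simp [eq_comm, and_assoc]

lemma chainFnE_convex_comb_le {f : ℝ → ℝ} (hF : ConvexOn ℝ (Ici 0) (ccdf f)) {p q t : ℝ}
    (ht₀ : 0 ≤ t) (ht₁ : t ≤ 1) :
    chainFnE f (t * p + (1 - t) * q) ≤
      ENNReal.ofReal t * chainFnE f p + ENNReal.ofReal (1 - t) * chainFnE f q := by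
  rcases ht₀.eq_or_lt with rfl | ht₀
  · simp
  rcases ht₁.eq_or_lt with rfl | ht₁
  · simp
  have ht₁' : 0 < 1 - t := sub_pos.2 ht₁
  rw [chainFnE_eq_iInf f p, chainFnE_eq_iInf f q,
    ENNReal.mul_iInf_of_ne (by simpa using ht₀) ENNReal.ofReal_ne_top,
    ENNReal.mul_iInf_of_ne (by simpa using ht₁') ENNReal.ofReal_ne_top]
  refine ENNReal.le_iInf_add_iInf fun ⟨s₁, hs₁, hp⟩ ⟨s₂, hs₂, hq⟩ => ?_
  have hs₁' := mul_nonneg ht₀.le hs₁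
  have hs₂' := mul_nonneg ht₁'.le hs₂
  have hccdf : ccdf f (t * s₁ + (1 - t) * s₂) ≤ t * p + (1 - t) * q := by
    have := hF.2 (mem_Ici.2 hs₁) (mem_Ici.2 hs₂) ht₀.le ht₁'.le (by ring)
    simp only [smul_eq_mul] at this
    nlinarith
  calc chainFnE f (t * p + (1 - t) * q) ≤ ENNReal.ofReal (t * s₁ + (1 - t) * s₂) :=
        sInf_le ⟨_, add_nonneg hs₁' hs₂', hccdf, rfl⟩
    _ = _ := by rw [ENNReal.ofReal_add hs₁' hs₂', ENNReal.ofReal_mul ht₀.le,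
        ENNReal.ofReal_mul ht₁'.le]

lemma chainFnE_antitone (f : ℝ → ℝ) : Antitone (chainFnE f) := fun _ _ hpq =>
  sInf_le_sInf fun _ ⟨s, hs, hF, ht⟩ => ⟨s, hs, hF.trans hpq, ht⟩

lemma isProbOn_single {X : Type*} [Fintype X] [DecidableEq X] (x₀ : X) :
    IsProbOn (Pi.single x₀ (1 : ℝ)) :=
  ⟨fun y => by by_cases h : y = x₀ <;> simp [h], by simp⟩

lemma IsProbOn.convex_comb {X : Type*} [Fintype X] {μ μ' : X → ℝ} (hμ : IsProbOn μ)
    (hμ' : IsProbOn μ') {t : ℝ} (ht₀ : 0 ≤ t) (ht₁ : t ≤ 1) :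
    IsProbOn fun y => t * μ y + (1 - t) * μ' y := by
  refine ⟨fun y => add_nonneg (mul_nonneg ht₀ (hμ.1 y)) (mul_nonneg (sub_nonneg.2 ht₁) (hμ'.1 y)),
    ?_⟩
  rw [Finset.sum_add_distrib, ← Finset.mul_sum, ← Finset.mul_sum, hμ.2, hμ'.2]
  ring

lemma isProbOn_const_inv_card (X : Type*) [Fintype X] [Nonempty X] :
    IsProbOn fun _ : X => ((Fintype.card X : ℝ))⁻¹ :=
  ⟨fun _ => by positivity, by simp [Finset.card_univ]⟩

lemma ofReal_sum_mul_toReal {X : Type*} [Fintype X] {w : X → ℝ} (hw : ∀ x, 0 ≤ w x)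
    {g : X → ℝ≥0∞} (hg : ∀ x, g x ≠ ⊤) :
    ENNReal.ofReal (∑ x, w x * (g x).toReal) = ∑ x, ENNReal.ofReal (w x) * g x := by
  rw [ENNReal.ofReal_sum_of_nonneg fun x _ => mul_nonneg (hw x) ENNReal.toReal_nonneg]
  simp only [ENNReal.ofReal_mul (hw _), ENNReal.ofReal_toReal (hg _)]

lemma iSup_isProbOn_sum_ofReal_mul {X : Type*} [Fintype X] (g : X → ℝ≥0∞) :
    ⨆ ν : {m : X → ℝ // IsProbOn m}, ∑ x, ENNReal.ofReal (ν.1 x) * g x = ⨆ x, g x := by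
  classical
  refine le_antisymm (iSup_le fun ν => ?_) (iSup_le fun x => ?_)
  · calc ∑ x, ENNReal.ofReal (ν.1 x) * g x ≤ ∑ x, ENNReal.ofReal (ν.1 x) * ⨆ y, g y := by
          gcongr with x; exact le_iSup g x
      _ = ⨆ y, g y := by
          rw [← Finset.sum_mul, ← ENNReal.ofReal_sum_of_nonneg fun x _ => ν.2.1 x, ν.2.2,
            ENNReal.ofReal_one, one_mul]
  · refine le_of_eq_of_le ?_ (le_iSup _ ⟨_, isProbOn_single x⟩)
    simp [Pi.single_apply, apply_ite ENNReal.ofReal, ite_mul]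

section Ball

variable {X : Type*} [MetricSpace X] [Fintype X]

lemma ballMass_mono {μ : X → ℝ} (hμ : ∀ y, 0 ≤ μ y) (x : X) : Monotone (ballMass μ x) :=
  fun _ _ hr => Finset.sum_le_sum_of_subset_of_nonneg
    (Finset.monotone_filter_right _ fun _ _ hy => hy.trans hr) fun y _ _ => hμ y

lemma ballMass_add_smul (μ μ' : X → ℝ) (s t : ℝ) (x : X) (r : ℝ) :
    ballMass (fun y => s * μ y + t * μ' y) x r = s * ballMass μ x r + t * ballMass μ' x r := by
  simp only [ballMass, Finset.sum_add_distrib, Finset.mul_sum]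

lemma Hint_convex_comb_le {f : ℝ → ℝ} (hF : ConvexOn ℝ (Ici 0) (ccdf f)) {μ μ' : X → ℝ}
    (hμ : ∀ y, 0 ≤ μ y) {t : ℝ} (ht₀ : 0 ≤ t) (ht₁ : t ≤ 1) (x : X) :
    Hint f (fun y => t * μ y + (1 - t) * μ' y) x ≤
      ENNReal.ofReal t * Hint f μ x + ENNReal.ofReal (1 - t) * Hint f μ' x := by
  have hmeas : Measurable fun r => chainFnE f (ballMass μ x r) :=
    ((chainFnE_antitone f).comp_monotone (ballMass_mono hμ x)).measurable
  calc Hint f (fun y => t * μ y + (1 - t) * μ' y) x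
      ≤ ∫⁻ r in Ioi 0, ENNReal.ofReal t * chainFnE f (ballMass μ x r)
          + ENNReal.ofReal (1 - t) * chainFnE f (ballMass μ' x r) :=
        lintegral_mono fun r => by
          rw [ballMass_add_smul]
          exact chainFnE_convex_comb_le hF ht₀ ht₁
    _ = ENNReal.ofReal t * Hint f μ x + ENNReal.ofReal (1 - t) * Hint f μ' x := by
        rw [lintegral_add_left (hmeas.const_mul _),
          lintegral_const_mul' _ _ ENNReal.ofReal_ne_top,
          lintegral_const_mul' _ _ ENNReal.ofReal_ne_top, Hint, Hint]

end Ball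

lemma apply_nonpos_of_isUpperSet {ι : Type*} {A : Set (ι → ℝ)} (hup : IsUpperSet A)
    {a₀ : ι → ℝ} (ha₀ : a₀ ∈ A) (L : (ι → ℝ) →L[ℝ] ℝ) {u : ℝ} (hL : ∀ a ∈ A, L a < u)
    {v : ι → ℝ} (hv : 0 ≤ v) : L v ≤ 0 := by
  by_contra! hpos
  have hM : 0 ≤ (u - L a₀) / L v := div_nonneg (sub_nonneg.2 (hL a₀ ha₀).le) hpos.le
  have hmem : a₀ + ((u - L a₀) / L v) • v ∈ A :=
    hup (le_add_of_nonneg_right (smul_nonneg hM hv)) ha₀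
  have := hL _ hmem
  rw [map_add, map_smul, smul_eq_mul, div_mul_cancel₀ _ hpos.ne'] at this
  linarith

section Separation

variable {X : Type*} [Fintype X] {A : Set (X → ℝ)}

/-- The normal of a hyperplane separating `p` from an upward closed set has nonnegative
entries, so it normalises to a probability vector. -/
lemma exists_isProbOn_sum_lt_of_notMem_closure (hA : Convex ℝ A) (hup : IsUpperSet A)
    (hne : A.Nonempty) {p : X → ℝ} (hp : p ∉ closure A) :
    ∃ ν, IsProbOn ν ∧ ∀ a ∈ A, ∑ x, ν x * p x < ∑ x, ν x * a x := by
  classical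
  obtain ⟨L, u, hLA, hLp⟩ := geometric_hahn_banach_closed_point hA.closure isClosed_closure hp
  obtain ⟨a₀, ha₀⟩ := hne
  set w : X → ℝ := fun x => -L (Pi.single x 1)
  have hL : ∀ a, L a = -∑ x, w x * a x := fun a => by
    conv_lhs => rw [← Finset.univ_sum_single a]
    simp only [map_sum, w, neg_mul, Finset.sum_neg_distrib, neg_neg]
    refine Finset.sum_congr rfl fun x _ => ?_
    rw [mul_comm, ← smul_eq_mul, ← map_smul, ← Pi.single_smul', smul_eq_mul, mul_one]
  have hw : ∀ x, 0 ≤ w x := fun x => neg_nonneg.2 <|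
    apply_nonpos_of_isUpperSet hup ha₀ L (fun a ha => hLA a (subset_closure ha))
      (Pi.single_nonneg.2 zero_le_one)
  set S := ∑ x, w x
  have hS : 0 < S := by
    refine (Finset.sum_nonneg fun x _ => hw x).lt_of_ne fun h => ?_
    have hw0 := (Finset.sum_eq_zero_iff_of_nonneg fun x _ => hw x).1 h.symm
    have hL0 : ∀ a, L a = 0 := fun a => by simp [hL, hw0]
    linarith [hLA a₀ (subset_closure ha₀), hL0 a₀, hL0 p]
  refine ⟨fun x => w x / S, ⟨fun x => div_nonneg (hw x) hS.le, by rw [← Finset.sum_div,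
    div_self hS.ne']⟩, fun a ha => ?_⟩
  simp only [div_mul_eq_mul_div, ← Finset.sum_div]
  rw [div_lt_div_iff_of_pos_right hS]
  linarith [hL a, hL p, hLA a (subset_closure ha)]

theorem exists_forall_lt_of_forall_isProbOn [Nonempty X] (hA : Convex ℝ A)
    (hup : IsUpperSet A) {c : ℝ} (h : ∀ ν, IsProbOn ν → ∃ a ∈ A, ∑ x, ν x * a x < c)
    {δ : ℝ} (hδ : 0 < δ) :
    ∃ a ∈ A, ∀ x, a x < c + δ := by
  classical
  by_cases hp : (fun _ => c) ∈ closure A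
  · obtain ⟨a, ha, hd⟩ := Metric.mem_closure_iff.1 hp δ hδ
    refine ⟨a, ha, fun x => ?_⟩
    have := (dist_le_pi_dist _ a x).trans_lt hd
    rw [Real.dist_eq, abs_lt] at this
    linarith
  · have hne : A.Nonempty :=
      let ⟨a, ha, _⟩ := h _ (isProbOn_single (Classical.arbitrary X))
      ⟨a, ha⟩
    obtain ⟨ν, hν, hsep⟩ := exists_isProbOn_sum_lt_of_notMem_closure hA hup hne hp
    obtain ⟨a, ha, hlt⟩ := h ν hν
    have := hsep a ha
    rw [← Finset.sum_mul, hν.2, one_mul] at this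
    linarith

end Separation

def hintMajorants (X : Type*) [MetricSpace X] [Fintype X] (f : ℝ → ℝ) : Set (X → ℝ) :=
  {a | 0 ≤ a ∧ ∃ μ, IsProbOn μ ∧ ∀ x, Hint f μ x ≤ ENNReal.ofReal (a x)}

section Duality

variable {X : Type*} [MetricSpace X] [Fintype X] {f : ℝ → ℝ}

lemma isUpperSet_hintMajorants : IsUpperSet (hintMajorants X f) :=
  fun _ _ hab ⟨ha₀, μ, hμ, hH⟩ =>
    ⟨ha₀.trans hab, μ, hμ, fun x => (hH x).trans (ENNReal.ofReal_le_ofReal (hab x))⟩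

lemma convex_hintMajorants (hF : ConvexOn ℝ (Ici 0) (ccdf f)) :
    Convex ℝ (hintMajorants X f) := by
  rintro a ⟨ha₀, μ, hμ, ha⟩ b ⟨hb₀, μ', hμ', hb⟩ s t hs ht hst
  obtain rfl : t = 1 - s := by linarith
  refine ⟨add_nonneg (smul_nonneg hs ha₀) (smul_nonneg ht hb₀), _, hμ.convex_comb hμ' hs
    (by linarith), fun x => ?_⟩
  calc Hint f (fun y => s * μ y + (1 - s) * μ' y) x
      ≤ ENNReal.ofReal s * Hint f μ x + ENNReal.ofReal (1 - s) * Hint f μ' x :=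
        Hint_convex_comb_le hF hμ.1 hs (by linarith) x
    _ ≤ ENNReal.ofReal s * ENNReal.ofReal (a x)
          + ENNReal.ofReal (1 - s) * ENNReal.ofReal (b x) := by
        gcongr
        exacts [ha x, hb x]
    _ = ENNReal.ofReal ((s • a + (1 - s) • b) x) := by
        rw [← ENNReal.ofReal_mul hs, ← ENNReal.ofReal_mul ht, ← ENNReal.ofReal_add
          (mul_nonneg hs (ha₀ x)) (mul_nonneg ht (hb₀ x))]
        rfl

lemma exists_Hint_ne_top_sum_lt {ν : X → ℝ} (hν : IsProbOn ν) (hpos : ∀ x, 0 < ν x) {c : ℝ}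
    (hc : gammaStar X f < ENNReal.ofReal c) :
    ∃ μ, IsProbOn μ ∧ (∀ x, Hint f μ x ≠ ⊤) ∧ ∑ x, ν x * (Hint f μ x).toReal < c := by
  obtain ⟨⟨μ, hμ⟩, hlt⟩ : ∃ μ : {m : X → ℝ // IsProbOn m},
      ∑ x, ENNReal.ofReal (ν x) * Hint f μ.1 x < ENNReal.ofReal c :=
    iInf_lt_iff.1 <| (le_iSup (fun ν : {m : X → ℝ // IsProbOn m} =>
      ⨅ μ : {m : X → ℝ // IsProbOn m}, ∑ x, ENNReal.ofReal (ν.1 x) * Hint f μ.1 x)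
        ⟨ν, hν⟩).trans_lt hc
  have hfin : ∀ x, Hint f μ x ≠ ⊤ := fun x htop => by
    have := (Finset.single_le_sum (fun y _ => zero_le) (Finset.mem_univ x)).trans_lt hlt
    rw [htop, ENNReal.mul_top (by simpa using hpos x)] at this
    exact not_top_lt this
  rw [← ofReal_sum_mul_toReal (fun x => (hpos x).le) hfin, ENNReal.ofReal_lt_ofReal_iff'] at hlt
  exact ⟨μ, hμ, hfin, hlt.1⟩

/-- Mixing `ν` with a little of the uniform measure gives it full support, which forces finite
integrals on a near-optimal `μ`; the cost of the mixing is absorbed in the margin `c - γ*`. -/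
lemma exists_mem_hintMajorants_sum_lt [Nonempty X] {ν : X → ℝ} (hν : IsProbOn ν) {c : ℝ}
    (hc : gammaStar X f < ENNReal.ofReal c) :
    ∃ a ∈ hintMajorants X f, ∑ x, ν x * a x < c := by
  obtain ⟨C, hC₀, hγ⟩ : ∃ C, 0 ≤ C ∧ gammaStar X f = ENNReal.ofReal C :=
    ⟨_, ENNReal.toReal_nonneg, (ENNReal.ofReal_toReal hc.ne_top).symm⟩
  obtain ⟨c', hCc', hc'c⟩ := exists_between (ENNReal.ofReal_lt_ofReal_iff'.1 (hγ ▸ hc)).1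
  have hc'₀ : 0 < c' := hC₀.trans_lt hCc'
  have hc₀ : 0 < c := hc'₀.trans hc'c
  set t := c' / c
  have ht₀ : 0 < t := div_pos hc'₀ hc₀
  have ht₁ : 0 < 1 - t := sub_pos.2 ((div_lt_one hc₀).2 hc'c)
  set u : ℝ := ((Fintype.card X : ℝ))⁻¹
  have hu : 0 < u := by positivity
  obtain ⟨μ, hμ, hfin, hlt⟩ := exists_Hint_ne_top_sum_lt (ν := fun y => t * ν y + (1 - t) * u)
    (hν.convex_comb (isProbOn_const_inv_card X) ht₀.le (sub_nonneg.1 ht₁.le))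
    (fun x => add_pos_of_nonneg_of_pos (mul_nonneg ht₀.le (hν.1 x)) (mul_pos ht₁ hu))
    (hγ ▸ (ENNReal.ofReal_lt_ofReal_iff hc'₀).2 hCc')
  refine ⟨fun x => (Hint f μ x).toReal, ⟨fun x => ENNReal.toReal_nonneg, μ, hμ,
    fun x => (ENNReal.ofReal_toReal (hfin x)).ge⟩, ?_⟩
  have hmix : t * ∑ x, ν x * (Hint f μ x).toReal ≤
      ∑ x, (t * ν x + (1 - t) * u) * (Hint f μ x).toReal := by
    rw [Finset.mul_sum]
    refine Finset.sum_le_sum fun x _ => ?_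
    have := mul_nonneg (mul_pos ht₁ hu).le (ENNReal.toReal_nonneg (a := Hint f μ x))
    linarith
  have htc : t * c = c' := div_mul_cancel₀ _ hc₀.ne'
  exact lt_of_mul_lt_mul_left (htc ▸ hmix.trans_lt hlt) ht₀.le

theorem gammaPrimal_le_gammaStar [Nonempty X] (hF : ConvexOn ℝ (Ici 0) (ccdf f)) :
    gammaPrimal X f ≤ gammaStar X f := by
  refine ENNReal.le_of_forall_pos_le_add fun ε hε hlt => ?_
  have hε' : (0 : ℝ) < ε := hε
  obtain ⟨C, hC₀, hγ⟩ : ∃ C, 0 ≤ C ∧ gammaStar X f = ENNReal.ofReal C :=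
    ⟨_, ENNReal.toReal_nonneg, (ENNReal.ofReal_toReal hlt.ne).symm⟩
  obtain ⟨a, ⟨-, μ, hμ, hHa⟩, hac⟩ := exists_forall_lt_of_forall_isProbOn
    (convex_hintMajorants hF) isUpperSet_hintMajorants (c := C + ε / 2)
    (fun ν hν => exists_mem_hintMajorants_sum_lt hν (by
      rw [hγ, ENNReal.ofReal_lt_ofReal_iff (by positivity)]
      linarith))
    (half_pos hε')
  calc gammaPrimal X f ≤ ⨆ x, Hint f μ x := iInf_le_of_le ⟨μ, hμ⟩ le_rfl
    _ ≤ ENNReal.ofReal (C + ε) :=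
        iSup_le fun x => (hHa x).trans (ENNReal.ofReal_le_ofReal (by linarith [hac x]))
    _ = gammaStar X f + ε := by
        rw [ENNReal.ofReal_add hC₀ hε'.le, ← hγ, ENNReal.ofReal_coe_nnreal]

end Duality

/-- strong duality `γ_h(X) = γ*_h(X)`: the min-max
`inf_μ sup_ν Σ_x ν(x)·∫₀^∞ h(μ(B(x,r))) dr` equals the max-min `γ*_h(X)`;
equivalently `inf_μ max_{x∈X} ∫₀^∞ h(μ(B(x,r))) dr = γ*_h(X)`. -/
theorem stmt7 {X : Type*} [MetricSpace X] [Fintype X] [Nonempty X]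
    (f : ℝ → ℝ) (hf : IsChainingDensity f) :
    (⨅ μ : {m : X → ℝ // IsProbOn m}, ⨆ ν : {m : X → ℝ // IsProbOn m},
        ∑ x, ENNReal.ofReal (ν.1 x) * Hint f μ.1 x) = gammaStar X f ∧
    gammaPrimal X f = gammaStar X f := by
  have hminimax : (⨅ μ : {m : X → ℝ // IsProbOn m}, ⨆ ν : {m : X → ℝ // IsProbOn m},
      ∑ x, ENNReal.ofReal (ν.1 x) * Hint f μ.1 x) = gammaPrimal X f :=
    iInf_congr fun μ => iSup_isProbOn_sum_ofReal_mul _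
  have hint : IntegrableOn f (Ioi 0) :=
    Integrable.of_integral_ne_zero (by rw [hf.total]; exact one_ne_zero)
  have hduality : gammaPrimal X f = gammaStar X f :=
    le_antisymm (gammaPrimal_le_gammaStar (convexOn_ccdf hf.antitoneOn hint))
      (hminimax ▸ iSup_iInf_le_iInf_iSup _)
  exact ⟨hminimax.trans hduality, hduality⟩
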